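/- Let (X,d) be a metric space and let γ : S¹ → X be an embedded circle (a Jordan curve) with compact image. Suppose the image Γ of γ admits an open cover by sets U_i such that on each U_i the curve satisfies a k_i-bounded turning condition (for all x, y ∈ Γ ∩ U_i, some connected component of Γ \ {x,y} has diameter at most k_i·d(x,y)). Then Γ satisfies a global k-bounded turning condition for some constant k < ∞. -/

import Mathlib

/-!
Take a Lebesgue number `δ` of a finite subcover of the compact curve `Γ`. Two points at distance
`< δ` lie in a common `U i`, where the local constant `k i` applies; for points at distance `≥ δ`
any component of `Γ \ {x, y}` has diameter at most `diam Γ ≤ (diam Γ / δ) · d(x, y)`, and such a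
component exists because the connected set `Γ` is infinite.
-/

open Metric Set

section

variable {X : Type*} [MetricSpace X]

theorem IsCompact.exists_pos_forall_dist_lt_exists_mem_cover {S : Set X} (hS : IsCompact S)
    {ι : Type*} {U : ι → Set X} (hU : ∀ i, IsOpen (U i)) (hSU : S ⊆ ⋃ i, U i) (k : ι → ℝ) :
    ∃ δ > 0, ∃ K : ℝ, ∀ x ∈ S, ∀ y, dist x y < δ → ∃ i, x ∈ U i ∧ y ∈ U i ∧ k i ≤ K := by
  obtain ⟨t, ht⟩ := hS.elim_finite_subcover U hU hSU
  have ht' : S ⊆ ⋃ i : t, U i := fun x hx => by simpa using ht hx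
  obtain ⟨δ, hδ, hleb⟩ := lebesgue_number_lemma_of_metric hS (fun i : t => hU i) ht'
  obtain ⟨K, hK⟩ := (t.image k).bddAbove
  refine ⟨δ, hδ, K, fun x hx y hxy => ?_⟩
  obtain ⟨i, hi⟩ := hleb x hx
  exact ⟨i, hi (mem_ball_self hδ), hi (mem_ball'.mpr hxy),
    hK (Finset.mem_coe.mpr (Finset.mem_image_of_mem k i.2))⟩

theorem IsPreconnected.nonempty_diff_pair {S : Set X} (hS : IsPreconnected S) {x y : X}
    (hx : x ∈ S) (hy : y ∈ S) (hxy : x ≠ y) : (S \ {x, y}).Nonempty :=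
  ((hS.infinite_of_nontrivial ⟨x, hx, y, hy, hxy⟩).sdiff (toFinite _)).nonempty

def BoundedTurningAt (Γ : Set X) (k : ℝ) (x y : X) : Prop :=
  ∃ z ∈ Γ \ {x, y}, diam (connectedComponentIn (Γ \ {x, y}) z) ≤ k * dist x y

theorem BoundedTurningAt.mono {Γ : Set X} {k k' : ℝ} {x y : X} (h : BoundedTurningAt Γ k x y)
    (hk : k ≤ k') : BoundedTurningAt Γ k' x y := by
  obtain ⟨z, hz, hdiam⟩ := h
  exact ⟨z, hz, hdiam.trans (mul_le_mul_of_nonneg_right hk dist_nonneg)⟩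

theorem boundedTurningAt_of_diam_le {Γ : Set X} (hΓ : IsPreconnected Γ)
    (hb : Bornology.IsBounded Γ) {k : ℝ} {x y : X} (hx : x ∈ Γ) (hy : y ∈ Γ) (hxy : x ≠ y)
    (hk : diam Γ ≤ k * dist x y) : BoundedTurningAt Γ k x y := by
  obtain ⟨z, hz⟩ := hΓ.nonempty_diff_pair hx hy hxy
  have hsub : connectedComponentIn (Γ \ {x, y}) z ⊆ Γ :=
    (connectedComponentIn_subset _ _).trans sdiff_subset
  exact ⟨z, hz, (diam_mono hsub hb).trans hk⟩

end

theorem bounded_turning_localizes_general {X : Type*} [MetricSpace X]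
    (γ : AddCircle (1 : ℝ) → X) (hcont : Continuous γ)
    {ι : Type*} (U : ι → Set X) (hopen : ∀ i, IsOpen (U i))
    (hcover : Set.range γ ⊆ ⋃ i, U i) (k : ι → ℝ)
    (hloc : ∀ i, ∀ x ∈ Set.range γ ∩ U i, ∀ y ∈ Set.range γ ∩ U i, x ≠ y →
      ∃ z ∈ Set.range γ \ {x, y},
        Metric.diam (connectedComponentIn (Set.range γ \ {x, y}) z) ≤ k i * dist x y) :
    ∃ k₀ : ℝ, ∀ x ∈ Set.range γ, ∀ y ∈ Set.range γ, x ≠ y →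
      ∃ z ∈ Set.range γ \ {x, y},
        Metric.diam (connectedComponentIn (Set.range γ \ {x, y}) z) ≤ k₀ * dist x y := by
  have hcompact : IsCompact (range γ) := isCompact_range hcont
  obtain ⟨δ, hδ, K, hnear⟩ :=
    hcompact.exists_pos_forall_dist_lt_exists_mem_cover hopen hcover k
  refine ⟨max K (diam (range γ) / δ), fun x hx y hy hxy => ?_⟩
  rcases lt_or_ge (dist x y) δ with hclose | hfar
  · obtain ⟨i, hxi, hyi, hki⟩ := hnear x hx y hclose
    exact BoundedTurningAt.mono (hloc i x ⟨hx, hxi⟩ y ⟨hy, hyi⟩ hxy) (hki.trans (le_max_left _ _))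
  · refine boundedTurningAt_of_diam_le (isPreconnected_range hcont) hcompact.isBounded hx hy hxy ?_
    calc diam (range γ) = diam (range γ) / δ * δ := (div_mul_cancel₀ _ hδ.ne').symm
      _ ≤ max K (diam (range γ) / δ) * dist x y :=
        mul_le_mul (le_max_right _ _) hfar hδ.le
          ((div_nonneg diam_nonneg hδ.le).trans (le_max_right _ _))

/-- Localization of the bounded turning condition: if a Jordan curve (embedded circle
with compact image) in a metric space satisfies a `k i`-bounded turning condition on
each element `U i` of an open cover of its image, then it satisfies a global
`k₀`-bounded turning condition for some `k₀`. -/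
theorem bounded_turning_localizes {X : Type*} [MetricSpace X]
    (γ : AddCircle (1 : ℝ) → X) (hcont : Continuous γ) (hinj : Function.Injective γ)
    {ι : Type*} (U : ι → Set X) (hopen : ∀ i, IsOpen (U i))
    (hcover : Set.range γ ⊆ ⋃ i, U i) (k : ι → ℝ)
    (hloc : ∀ i, ∀ x ∈ Set.range γ ∩ U i, ∀ y ∈ Set.range γ ∩ U i, x ≠ y →
      ∃ z ∈ Set.range γ \ {x, y},
        Metric.diam (connectedComponentIn (Set.range γ \ {x, y}) z) ≤ k i * dist x y) :
    ∃ k₀ : ℝ, ∀ x ∈ Set.range γ, ∀ y ∈ Set.range γ, x ≠ y →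
      ∃ z ∈ Set.range γ \ {x, y},
        Metric.diam (connectedComponentIn (Set.range γ \ {x, y}) z) ≤ k₀ * dist x y :=
  bounded_turning_localizes_general γ hcont U hopen hcover k hloc
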